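/- arXiv:2210.05543 — 11 statements merged into one kernel-verified Lean document; each statement's English description precedes it below -/
import Mathlib

section
/- For every integer M ≥ 2 and all reals b₁, …, b_M with 0 ≤ b_i ≤ M+1 for every i, there exists a real p with 0 < p < 2(M+1) such that for every i ∈ {1,…,M}: max(b_i + p, 2M+2 − b_i) ≥ (1 + 1/(4M+3)) · (M + 1 + p/2). -/
/-!
Solution `i` fails the bound for a job size `p` exactly when `b i` lies in the open interval
`(2M + 2 - t, t - p)`, `t = (1 + 1/(4M+3)) (M + 1 + p/2)`. We choose `M + 1` job sizes
`1 = q₀ < q₁ < ⋯ < q_M < 2(M + 1)` whose bad intervals are pairwise disjoint; by pigeonhole one of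
them contains none of the `M` numbers `b i`, and that `q_k` is the required `p`.
-/

open Set Function

theorem exists_forall_notMem_of_card_lt {ι κ α : Type*} [Fintype ι] [Fintype κ]
    (hcard : Fintype.card ι < Fintype.card κ) {I : κ → Set α} (hI : Pairwise (Disjoint on I))
    (b : ι → α) : ∃ k, ∀ i, b i ∉ I k := by
  by_contra! hmem
  choose f hf using hmem
  obtain ⟨k, k', hne, hkk'⟩ := Fintype.exists_ne_map_eq_of_card_lt f hcard
  exact (hI hne).notMem_of_mem_left (hf k) (hkk' ▸ hf k')

theorem pairwise_disjoint_Ioo_of_antitone {l u : ℕ → ℝ} (hl : Antitone l)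
    (hlu : ∀ k, u (k + 1) ≤ l k) : Pairwise (Disjoint on fun k ↦ Ioo (l k) (u k)) := by
  refine (pairwise_disjoint_on _).2 fun j k hjk ↦ ?_
  obtain ⟨d, rfl⟩ := Nat.exists_eq_add_of_lt hjk
  have hsep : u (j + d + 1) ≤ l j := (hlu _).trans (hl (Nat.le_add_right j d))
  rw [Ioo_disjoint_Ioo]
  exact (min_le_right _ _).trans (hsep.trans (le_max_left _ _))

theorem le_max_of_notMem_Ioo {b c p t : ℝ} (h : b ∉ Ioo (c - t) (t - p)) :
    t ≤ max (b + p) (c - b) := by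
  simp only [mem_Ioo, not_and_or, not_lt] at h
  rcases h with h | h
  · exact le_max_of_le_right (by linarith)
  · exact le_max_of_le_left (by linarith)

noncomputable def scaledOpt (m p : ℝ) : ℝ := (1 + 1 / (4 * m + 3)) * (m + 1 + p / 2)

/-- Closed form of `q₀ = 1`, `q_{k+1} = r (q_k + 1)` with `r = (2m+2)/(2m+1)`: this recursion is
what makes the bad interval of `q_{k+1}` end where the bad interval of `q_k` begins. -/
noncomputable def probeSize (m : ℝ) (k : ℕ) : ℝ :=
  ((2 * m + 2) / (2 * m + 1)) ^ k * (2 * m + 3) - (2 * m + 2)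

theorem scaledOpt_mono {m : ℝ} (hm : 0 ≤ m) : Monotone (scaledOpt m) := fun p q hpq ↦ by
  unfold scaledOpt
  gcongr

theorem probeSize_zero (m : ℝ) : probeSize m 0 = 1 := by
  simp only [probeSize, pow_zero]
  ring

theorem probeSize_monotone {m : ℝ} (hm : 0 ≤ m) : Monotone (probeSize m) := by
  intro j k hjk
  have : 1 ≤ (2 * m + 2) / (2 * m + 1) := by rw [one_le_div (by linarith)]; linarith
  unfold probeSize
  gcongr

theorem one_le_probeSize {m : ℝ} (hm : 0 ≤ m) (k : ℕ) : 1 ≤ probeSize m k :=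
  probeSize_zero m ▸ probeSize_monotone hm k.zero_le

theorem scaledOpt_sub_probeSize_succ {m : ℝ} (hm : 0 ≤ m) (k : ℕ) :
    scaledOpt m (probeSize m (k + 1)) - probeSize m (k + 1) =
      2 * m + 2 - scaledOpt m (probeSize m k) := by
  have : 2 * m + 1 ≠ 0 := by linarith
  have : 4 * m + 3 ≠ 0 := by linarith
  simp only [scaledOpt, probeSize, pow_succ]
  field_simp
  ring

theorem probeSize_lt {m : ℝ} (hm : 0 ≤ m) {n : ℕ} (hn : (n : ℝ) ≤ m) :
    probeSize m n < 2 * (m + 1) := by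
  set r := (2 * m + 2) / (2 * m + 1)
  have hbern : 1 + n * (-1 / (2 * m + 2)) ≤ (1 + -1 / (2 * m + 2)) ^ n :=
    one_add_mul_le_pow (by rw [neg_div, neg_le_neg_iff, div_le_iff₀ (by linarith)]; linarith) n
  have hinv : (1 + -1 / (2 * m + 2)) * r = 1 := by
    simp only [r]
    field_simp
    ring
  have hpow : r ^ n * ((m + 2) / (2 * m + 2)) ≤ 1 :=
    calc r ^ n * ((m + 2) / (2 * m + 2)) ≤ r ^ n * (1 + n * (-1 / (2 * m + 2))) := by
          gcongr
          rw [div_le_iff₀ (by linarith)]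
          field_simp
          linarith
      _ ≤ r ^ n * (1 + -1 / (2 * m + 2)) ^ n := by gcongr
      _ = 1 := by rw [← mul_pow, mul_comm, hinv, one_pow]
  rw [mul_div_assoc', div_le_one (by linarith)] at hpow
  unfold probeSize
  nlinarith

theorem stmt_0_general (M : ℕ) (b : Fin M → ℝ) :
    ∃ p : ℝ, 0 < p ∧ p < 2 * ((M : ℝ) + 1) ∧
      ∀ i, max (b i + p) (2 * (M : ℝ) + 2 - b i) ≥
        (1 + 1 / (4 * (M : ℝ) + 3)) * ((M : ℝ) + 1 + p / 2) := by
  have hM : (0 : ℝ) ≤ M := M.cast_nonneg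
  set q := probeSize M
  have hdisj : Pairwise (Disjoint on fun k : ℕ ↦
      Ioo (2 * (M : ℝ) + 2 - scaledOpt M (q k)) (scaledOpt M (q k) - q k)) :=
    pairwise_disjoint_Ioo_of_antitone
      (fun j k hjk ↦ by gcongr; exact scaledOpt_mono hM (probeSize_monotone hM hjk))
      (fun k ↦ (scaledOpt_sub_probeSize_succ hM k).le)
  have hcard : Fintype.card (Fin M) < Fintype.card (Fin (M + 1)) := by simp
  obtain ⟨k, hk⟩ :=
    exists_forall_notMem_of_card_lt hcard (hdisj.comp_of_injective Fin.val_injective) b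
  refine ⟨q k, ?_, ?_, fun i ↦ le_max_of_notMem_Ioo (hk i)⟩
  · exact zero_lt_one.trans_le (one_le_probeSize hM k)
  · exact (probeSize_monotone hM (Nat.le_of_lt_succ k.isLt)).trans_lt (probeSize_lt hM le_rfl)

/-- Arithmetic core of Proposition 1 (unsorted case): for M ≥ 2 solutions with
"both-busy" durations b i ∈ [0, M+1], there is a third-job size p with
0 < p < 2(M+1) such that every solution's maximum completion time,
max (b i + p) (2M+2 − b i), is at least (1 + 1/(4M+3)) times the optimal
offline makespan M + 1 + p/2. -/
theorem stmt_0 (M : ℕ) (hM : 2 ≤ M) (b : Fin M → ℝ)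
    (hb : ∀ i, 0 ≤ b i ∧ b i ≤ (M : ℝ) + 1) :
    ∃ p : ℝ, 0 < p ∧ p < 2 * ((M : ℝ) + 1) ∧
      ∀ i, max (b i + p) (2 * (M : ℝ) + 2 - b i) ≥
        (1 + 1 / (4 * (M : ℝ) + 3)) * ((M : ℝ) + 1 + p / 2) :=
  stmt_0_general M b
end

section
/- For every integer M ≥ 2 and all reals b₁, …, b_M with 0 ≤ b_i ≤ M+1 for every i, there exists a real p with 0 < p < M+1 such that for every i ∈ {1,…,M}: max(b_i + p, 2M+2 − b_i) ≥ (1 + 1/(6M+5)) · (M + 1 + p/2). -/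
/-!
Try the M + 1 third-job sizes p = k + 1/2, k = 0, …, M. For a fixed p, the values of b that
make max (b + p) (2M + 2 - b) fall short of (1 + ε)(M + 1 + p/2) form an open interval of
length ε(2M + 2 + p), and raising p by one moves that interval down by about 1/2.
With ε = 1/(6M + 5) these M + 1 intervals are pairwise disjoint, so the M values b i cannot
meet all of them: some candidate p is good for every solution.
-/

open Set Function

theorem exists_forall_notMem_of_pairwise_disjoint {ι κ α : Type*} [Fintype ι] [Fintype κ]
    {s : ι → Set α} (hs : Pairwise (Disjoint on s)) (x : κ → α)
    (hcard : Fintype.card κ < Fintype.card ι) : ∃ i, ∀ j, x j ∉ s i := by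
  by_contra! h
  choose f hf using h
  obtain ⟨i, i', hne, heq⟩ := Fintype.exists_ne_map_eq_of_card_lt f hcard
  exact Set.disjoint_left.mp (hs hne) (hf i) (heq ▸ hf i')

def shortfallSet (ε c p : ℝ) : Set ℝ :=
  {b | max (b + p) (2 * c - b) < (1 + ε) * (c + p / 2)}

theorem disjoint_shortfallSet {ε c p p' : ℝ} (h : ε * (4 * c + p + p') ≤ p' - p) :
    Disjoint (shortfallSet ε c p) (shortfallSet ε c p') := by
  refine Set.disjoint_left.mpr fun b hb hb' => ?_
  simp only [shortfallSet, mem_ofPred_eq, max_lt_iff] at hb hb'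
  linarith [hb.2, hb'.1]

theorem pairwise_disjoint_shortfallSet_half_integers (M : ℕ) :
    Pairwise (Disjoint on fun k : Fin (M + 1) =>
      shortfallSet (1 / (6 * M + 5)) (M + 1) ((k : ℝ) + 1 / 2)) := by
  rw [pairwise_disjoint_on]
  intro k k' hlt
  apply disjoint_shortfallSet
  have hk : (k : ℝ) ≤ M := by exact_mod_cast Nat.lt_succ_iff.mp k.isLt
  have hk' : (k' : ℝ) ≤ M := by exact_mod_cast Nat.lt_succ_iff.mp k'.isLt
  have hstep : (k : ℝ) + 1 ≤ k' := by exact_mod_cast Fin.lt_def.mp hlt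
  calc 1 / (6 * (M : ℝ) + 5) * (4 * (M + 1) + (k + 1 / 2) + (k' + 1 / 2))
      ≤ 1 / (6 * (M : ℝ) + 5) * (6 * M + 5) :=
        mul_le_mul_of_nonneg_left (by linarith) (by positivity)
    _ = 1 := by field_simp
    _ ≤ (k' + 1 / 2) - (k + 1 / 2) := by linarith

theorem stmt_1_general (M : ℕ) (b : Fin M → ℝ) :
    ∃ p : ℝ, 0 < p ∧ p < (M : ℝ) + 1 ∧
      ∀ i, max (b i + p) (2 * (M : ℝ) + 2 - b i) ≥
        (1 + 1 / (6 * (M : ℝ) + 5)) * ((M : ℝ) + 1 + p / 2) := by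
  obtain ⟨k, hk⟩ := exists_forall_notMem_of_pairwise_disjoint
    (pairwise_disjoint_shortfallSet_half_integers M) b (by simp)
  have hkM : (k : ℝ) ≤ M := by exact_mod_cast Nat.lt_succ_iff.mp k.isLt
  refine ⟨k + 1 / 2, by positivity, by linarith, fun i => le_of_not_gt fun h => hk i ?_⟩
  simpa only [shortfallSet, mem_ofPred_eq, mul_add, mul_one] using h

/-- Arithmetic core of Proposition 1 (sorted case): for M ≥ 2 solutions with
"both-busy" durations b i ∈ [0, M+1], there is a third-job size p with
0 < p < M+1 such that every solution's maximum completion time,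
max (b i + p) (2M+2 − b i), is at least (1 + 1/(6M+5)) times the optimal
offline makespan M + 1 + p/2. -/
theorem stmt_1 (M : ℕ) (hM : 2 ≤ M) (b : Fin M → ℝ)
    (hb : ∀ i, 0 ≤ b i ∧ b i ≤ (M : ℝ) + 1) :
    ∃ p : ℝ, 0 < p ∧ p < (M : ℝ) + 1 ∧
      ∀ i, max (b i + p) (2 * (M : ℝ) + 2 - b i) ≥
        (1 + 1 / (6 * (M : ℝ) + 5)) * ((M : ℝ) + 1 + p / 2) :=
  stmt_1_general M b
end

section
/- Let α = (√5 − 1)/2. There do not exist a real r with r < √5 − 1 and nonnegative reals t₁, t₂, u₁, u₂ satisfying all of: t₁ + t₂ = 1, u₁ + u₂ = 1 + α, t₁ ≤ r/2, min(t₂ + α, u₁) ≤ r·(1+α)/2, and min(t₂ + α + 1, u₂ + α + 1) ≤ r·(1+α). -/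
/-!
Write `α = (√5 - 1)/2`, so that `α (1 + α) = 1`, and suppose `r < 2α`. Then `t₁ ≤ r/2 < α` forces
`t₂ + α > 1 > r (1 + α)/2`, so the second constraint can only be met by `u₁ < 1`, that is `u₂ > α`.
In the last stage both `t₂ + α + 1 > 2` and `u₂ + α + 1 > 2α + 1 > 2` exceed `r (1 + α) < 2`.
-/

theorem two_mul_le_of_min_le {a r t₁ t₂ u₁ u₂ : ℝ} (ha : 0 < a) (ha₁ : a * (1 + a) = 1)
    (ht : t₁ + t₂ = 1) (hu : u₁ + u₂ = 1 + a) (h₁ : t₁ ≤ r / 2)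
    (h₂ : min (t₂ + a) u₁ ≤ r * (1 + a) / 2)
    (h₃ : min (t₂ + a + 1) (u₂ + a + 1) ≤ r * (1 + a)) : 2 * a ≤ r := by
  by_contra! hr
  have hbound : r * (1 + a) < 2 := by nlinarith
  have ht₂ : 1 < t₂ + a := by linarith
  have hu₁ : u₁ < 1 := by
    rcases min_le_iff.1 h₂ with h | h <;> linarith
  have ha_half : 1 / 2 < a := by nlinarith
  rcases min_le_iff.1 h₃ with h | h <;> linarith

theorem one_lt_sqrt_five : 1 < Real.sqrt 5 := by
  rw [Real.lt_sqrt zero_le_one]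
  norm_num

theorem sqrt_five_sub_one_div_two_mul_one_add :
    (Real.sqrt 5 - 1) / 2 * (1 + (Real.sqrt 5 - 1) / 2) = 1 := by
  linear_combination Real.sq_sqrt (show (0 : ℝ) ≤ 5 by norm_num) / 4

/-- Arithmetic core of Proposition 2: no competitive ratio r < √5 − 1 is
achievable by two parallel preemptive solutions on two identical machines. -/
theorem stmt_2 :
    ¬ ∃ (r t₁ t₂ u₁ u₂ : ℝ),
      r < Real.sqrt 5 - 1 ∧
      0 ≤ t₁ ∧ 0 ≤ t₂ ∧ 0 ≤ u₁ ∧ 0 ≤ u₂ ∧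
      t₁ + t₂ = 1 ∧
      u₁ + u₂ = 1 + (Real.sqrt 5 - 1) / 2 ∧
      t₁ ≤ r / 2 ∧
      min (t₂ + (Real.sqrt 5 - 1) / 2) u₁ ≤ r * (1 + (Real.sqrt 5 - 1) / 2) / 2 ∧
      min (t₂ + (Real.sqrt 5 - 1) / 2 + 1) (u₂ + (Real.sqrt 5 - 1) / 2 + 1) ≤
        r * (1 + (Real.sqrt 5 - 1) / 2) := by
  rintro ⟨r, t₁, t₂, u₁, u₂, hr, -, -, -, -, ht, hu, h₁, h₂, h₃⟩
  have hα : 0 < (Real.sqrt 5 - 1) / 2 := by linarith [one_lt_sqrt_five]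
  have := two_mul_le_of_min_le hα sqrt_five_sub_one_div_two_mul_one_add ht hu h₁ h₂ h₃
  linarith
end

section
/- Let α = √6 − 2. There do not exist a real ρ with ρ < 6 − 2√6 and nonnegative reals t₁, t₂, x₁, x₂ satisfying all of: t₁ + t₂ = 2, x₁ + x₂ = 2, t₁ ≤ x₁, t₁ ≤ ρ, min(t₂ + 1, x₂ + 1) ≤ (3/2)·ρ, and min(t₂ + α, x₁) ≤ ρ·(2+α)/2. -/
/-! Since `t₁ ≤ x₁`, the unit-job bound reads `3 - x₁ ≤ 3ρ/2`. In the `α`-job scenario either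
`x₁ ≤ ρ√6/2`, which together with the unit-job bound gives `ρ (3 + √6) ≥ 6`, or
`√6 - t₁ ≤ ρ√6/2`, which together with `t₁ ≤ ρ` gives `ρ (2 + √6) ≥ 2√6`. The choice
`α = √6 - 2` makes both thresholds equal to `6 - 2√6`. -/

open Real

lemma six_sub_two_sqrt_six_mul_three_add_sqrt_six : (6 - 2 * √6) * (3 + √6) = 6 := by
  have h : √6 ^ 2 = 6 := sq_sqrt (by norm_num)
  linear_combination -2 * h

lemma six_sub_two_sqrt_six_mul_two_add_sqrt_six : (6 - 2 * √6) * (2 + √6) = 2 * √6 := by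
  have h : √6 ^ 2 = 6 := sq_sqrt (by norm_num)
  linear_combination -2 * h

/-- Arithmetic core of Proposition 3: no competitive ratio ρ < 6 − 2√6 is
achievable by two parallel preemptive solutions on two identical machines,
even for inputs sorted by non-increasing sizes. -/
theorem stmt_3 :
    ¬ ∃ (ρ t₁ t₂ x₁ x₂ : ℝ),
      ρ < 6 - 2 * Real.sqrt 6 ∧
      0 ≤ t₁ ∧ 0 ≤ t₂ ∧ 0 ≤ x₁ ∧ 0 ≤ x₂ ∧
      t₁ + t₂ = 2 ∧
      x₁ + x₂ = 2 ∧
      t₁ ≤ x₁ ∧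
      t₁ ≤ ρ ∧
      min (t₂ + 1) (x₂ + 1) ≤ 3 / 2 * ρ ∧
      min (t₂ + (Real.sqrt 6 - 2)) x₁ ≤ ρ * (2 + (Real.sqrt 6 - 2)) / 2 := by
  rintro ⟨ρ, t₁, t₂, x₁, x₂, hρ, -, -, -, -, ht, hx, htx, htρ, hunit, hα⟩
  have hunit' : x₂ + 1 ≤ 3 / 2 * ρ := by rwa [min_eq_right (by linarith)] at hunit
  rw [show 2 + (√6 - 2) = √6 by ring] at hα
  refine hρ.not_ge ?_
  rcases min_le_iff.1 hα with hT | hX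
  · refine le_of_mul_le_mul_right ?_ (by positivity : (0 : ℝ) < 2 + √6)
    rw [six_sub_two_sqrt_six_mul_two_add_sqrt_six]
    linarith
  · refine le_of_mul_le_mul_right ?_ (by positivity : (0 : ℝ) < 3 + √6)
    rw [six_sub_two_sqrt_six_mul_three_add_sqrt_six]
    linarith
end

section
/- Let φ = (1+√5)/2 and R = √5 − 1. Let W', p, Q', Q, a₁', a₂' be reals with W' > 0, p > 0, p ≤ (2 − φ)·W where W = W' + p, a₁' + a₂' = W', W'/φ ≤ a₁' ≤ R·Q', Q' ≤ Q, and Q ≥ W/2. Define (a₁, a₂) = (a₁', a₂' + p) if a₂' + p ≤ W/φ², and (a₁, a₂) = (W/φ, W/φ²) otherwise. Then a₁ + a₂ = W and W/φ ≤ a₁ ≤ R·Q; moreover, in the second case, a₂' ≤ W/φ² ≤ a₁' ≤ W/φ (so the time intervals [a₂', W/φ²) and [a₁', W/φ) allocated to the new job on the two machines are disjoint, have nonnegative lengths, and have total length p). -/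
/-!
Write φ for the golden ratio, so that 1/φ + 1/φ² = 1, 1/φ² = 2 − φ and R = 2/φ. If the new job
fits on the second machine below W/φ², the first machine keeps its load a₁' = W − (a₂' + p) ≥ W − W/φ²
= W/φ. Otherwise the loads become W/φ and W/φ², and R·Q ≥ R·W/2 = W/φ. In that case the two intervals
are well placed because a₂' ≤ W'/φ² ≤ W/φ², a₁' ≥ W'/φ ≥ (W − (2 − φ)W)/φ = W/φ², and a₁' ≤ W/φ since
a₂' + p > W/φ².
-/

open Real

lemma div_goldenRatio_add_div_goldenRatio_sq (x : ℝ) :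
    x / goldenRatio + x / goldenRatio ^ 2 = x := by
  have hsq := goldenRatio_sq
  have hne := goldenRatio_ne_zero
  generalize goldenRatio = φ at *
  field_simp
  linear_combination (-x) * hsq

lemma two_sub_goldenRatio_mul (x : ℝ) : (2 - goldenRatio) * x = x / goldenRatio ^ 2 := by
  have hsq := goldenRatio_sq
  have hne := goldenRatio_ne_zero
  generalize goldenRatio = φ at *
  field_simp
  linear_combination (1 - φ) * x * hsq

lemma sqrt_five_sub_one_eq_two_div_goldenRatio : √5 - 1 = 2 / goldenRatio := by
  rw [eq_div_iff goldenRatio_ne_zero, goldenRatio]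
  nlinarith [Real.sq_sqrt (show (0 : ℝ) ≤ 5 by norm_num)]

lemma sqrt_five_sub_one_nonneg : 0 ≤ √5 - 1 := by
  rw [sqrt_five_sub_one_eq_two_div_goldenRatio]
  exact div_nonneg zero_le_two goldenRatio_pos.le

lemma div_goldenRatio_le_sqrt_five_sub_one_mul {W Q : ℝ} (hQW : W / 2 ≤ Q) :
    W / goldenRatio ≤ (√5 - 1) * Q :=
  calc W / goldenRatio = (√5 - 1) * (W / 2) := by
        rw [sqrt_five_sub_one_eq_two_div_goldenRatio]; ring
    _ ≤ (√5 - 1) * Q := mul_le_mul_of_nonneg_left hQW sqrt_five_sub_one_nonneg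

section Loads

variable {W' p a₁' a₂' : ℝ}

lemma div_goldenRatio_le_of_add_le_div_goldenRatio_sq (hsum : a₁' + a₂' = W')
    (hfit : a₂' + p ≤ (W' + p) / goldenRatio ^ 2) : (W' + p) / goldenRatio ≤ a₁' := by
  linarith [div_goldenRatio_add_div_goldenRatio_sq (W' + p)]

lemma le_div_goldenRatio_sq_of_div_goldenRatio_le (hp : 0 ≤ p) (hsum : a₁' + a₂' = W')
    (hlow : W' / goldenRatio ≤ a₁') : a₂' ≤ (W' + p) / goldenRatio ^ 2 :=
  calc a₂' ≤ W' / goldenRatio ^ 2 := by linarith [div_goldenRatio_add_div_goldenRatio_sq W']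
    _ ≤ (W' + p) / goldenRatio ^ 2 := by gcongr; linarith

lemma div_goldenRatio_sq_le_of_div_goldenRatio_le (hpW : p ≤ (2 - goldenRatio) * (W' + p))
    (hlow : W' / goldenRatio ≤ a₁') : (W' + p) / goldenRatio ^ 2 ≤ a₁' :=
  calc (W' + p) / goldenRatio ^ 2 = ((W' + p) - (W' + p) / goldenRatio ^ 2) / goldenRatio := by
        rw [sub_eq_of_eq_add (div_goldenRatio_add_div_goldenRatio_sq (W' + p)).symm, div_div, sq]
    _ ≤ W' / goldenRatio := by
        gcongr
        linarith [two_sub_goldenRatio_mul (W' + p)]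
    _ ≤ a₁' := hlow

lemma le_div_goldenRatio_of_div_goldenRatio_sq_lt (hsum : a₁' + a₂' = W')
    (hover : (W' + p) / goldenRatio ^ 2 < a₂' + p) : a₁' ≤ (W' + p) / goldenRatio := by
  linarith [div_goldenRatio_add_div_goldenRatio_sq (W' + p)]

end Loads

theorem stmt_9_general (φ R W' p W Q' Q a₁' a₂' : ℝ)
    (hφ : φ = (1 + Real.sqrt 5) / 2) (hR : R = Real.sqrt 5 - 1)
    (hW : W = W' + p) (hp : 0 < p)
    (hpW : p ≤ (2 - φ) * W)
    (hsum : a₁' + a₂' = W')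
    (hlow : W' / φ ≤ a₁') (hhigh : a₁' ≤ R * Q')
    (hQ : Q' ≤ Q) (hQW : Q ≥ W / 2) :
    (if a₂' + p ≤ W / φ ^ 2 then a₁' else W / φ) +
      (if a₂' + p ≤ W / φ ^ 2 then a₂' + p else W / φ ^ 2) = W ∧
    W / φ ≤ (if a₂' + p ≤ W / φ ^ 2 then a₁' else W / φ) ∧
    (if a₂' + p ≤ W / φ ^ 2 then a₁' else W / φ) ≤ R * Q ∧
    (¬ (a₂' + p ≤ W / φ ^ 2) →
      a₂' ≤ W / φ ^ 2 ∧ W / φ ^ 2 ≤ a₁' ∧ a₁' ≤ W / φ) := by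
  subst hφ hR hW
  split_ifs with hfit
  · exact ⟨by linarith, div_goldenRatio_le_of_add_le_div_goldenRatio_sq hsum hfit,
      hhigh.trans (mul_le_mul_of_nonneg_left hQ sqrt_five_sub_one_nonneg),
      fun hover => absurd hfit hover⟩
  · exact ⟨div_goldenRatio_add_div_goldenRatio_sq _, le_rfl,
      div_goldenRatio_le_sqrt_five_sub_one_mul hQW, fun _ =>
      ⟨le_div_goldenRatio_sq_of_div_goldenRatio_le hp.le hsum hlow,
        div_goldenRatio_sq_le_of_div_goldenRatio_le hpW hlow,
        le_div_goldenRatio_of_div_goldenRatio_sq_lt hsum (not_le.mp hfit)⟩⟩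

/-- Invariant preservation for Case 1 of solution A of the two-solution
preemptive algorithm (Section 3): with φ = (1+√5)/2 and R = √5 − 1, the new
loads (a₁, a₂) satisfy a₁ + a₂ = W and W/φ ≤ a₁ ≤ R·Q; moreover, in the
preemptive sub-case, the two allocated intervals are disjoint with
nonnegative lengths. -/
theorem stmt_9 (φ R W' p W Q' Q a₁' a₂' : ℝ)
    (hφ : φ = (1 + Real.sqrt 5) / 2) (hR : R = Real.sqrt 5 - 1)
    (hW : W = W' + p) (hW' : 0 < W') (hp : 0 < p)
    (hpW : p ≤ (2 - φ) * W)
    (hsum : a₁' + a₂' = W')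
    (hlow : W' / φ ≤ a₁') (hhigh : a₁' ≤ R * Q')
    (hQ : Q' ≤ Q) (hQW : Q ≥ W / 2) :
    (if a₂' + p ≤ W / φ ^ 2 then a₁' else W / φ) +
      (if a₂' + p ≤ W / φ ^ 2 then a₂' + p else W / φ ^ 2) = W ∧
    W / φ ≤ (if a₂' + p ≤ W / φ ^ 2 then a₁' else W / φ) ∧
    (if a₂' + p ≤ W / φ ^ 2 then a₁' else W / φ) ≤ R * Q ∧
    (¬ (a₂' + p ≤ W / φ ^ 2) →
      a₂' ≤ W / φ ^ 2 ∧ W / φ ^ 2 ≤ a₁' ∧ a₁' ≤ W / φ) :=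
  stmt_9_general φ R W' p W Q' Q a₁' a₂' hφ hR hW hp hpW hsum hlow hhigh hQ hQW
end

section
/- Let φ = (1+√5)/2 and R = √5 − 1. Let W', p, Q', Q, b₁', b₂' be reals with W' > 0, p > 0, p ≤ (2 − φ)·W where W = W' + p, b₁' + b₂' = W', 2W'/φ² ≤ b₁' ≤ R²·Q', Q' ≤ Q, and Q ≥ W/2. Define (b₁, b₂) = (b₁', b₂' + p) if b₂' + p ≤ W/φ³, and (b₁, b₂) = (2W/φ², W/φ³) otherwise. Then b₁ + b₂ = W and 2W/φ² ≤ b₁ ≤ R²·Q; moreover, in the second case, b₂' ≤ W/φ³ ≤ b₁' ≤ 2W/φ² (so the time intervals [b₂', W/φ³) and [b₁', 2W/φ²) allocated to the new job on the two machines are disjoint, have nonnegative lengths, and have total length p). -/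
/-!
Since `φ² = φ + 1`, one has `R = 2/φ`, `2 - φ = 1/φ²` and
`2/φ² + 1/φ³ = 1`. The last identity is the whole non-preemptive case, since
`b₁' = W - (b₂' + p) ≥ W - W/φ³`. In the preemptive case it gives `b₁ + b₂ = W`, and
`Q ≥ W/2` gives `R²Q ≥ 2W/φ²`. For the intervals, `b₂' = W' - b₁' ≤ W'/φ³` by the old
invariant, while `p ≤ W/φ²` forces `W' ≥ W/φ`, hence `b₁' ≥ 2W'/φ² ≥ 2W/φ³`.
-/

section GoldenEquation

variable {φ : ℝ}

theorem ne_zero_of_sq_eq_add_one (hφ : φ ^ 2 = φ + 1) : φ ≠ 0 := by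
  rintro rfl
  norm_num at hφ

theorem div_add_div_sq_of_sq_eq_add_one (hφ : φ ^ 2 = φ + 1) (x : ℝ) :
    x / φ + x / φ ^ 2 = x := by
  have := ne_zero_of_sq_eq_add_one hφ
  field_simp
  linear_combination -x * hφ

theorem two_mul_div_sq_add_div_cube_of_sq_eq_add_one (hφ : φ ^ 2 = φ + 1) (x : ℝ) :
    2 * x / φ ^ 2 + x / φ ^ 3 = x := by
  have := ne_zero_of_sq_eq_add_one hφ
  field_simp
  linear_combination -x * (φ + 1) * hφ

theorem two_sub_mul_of_sq_eq_add_one (hφ : φ ^ 2 = φ + 1) (x : ℝ) :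
    (2 - φ) * x = x / φ ^ 2 := by
  have := ne_zero_of_sq_eq_add_one hφ
  field_simp
  linear_combination -x * (φ - 1) * hφ

end GoldenEquation

theorem preemptive_intervals_disjoint {φ W' p W b₁' b₂' : ℝ} (hφ : φ ^ 2 = φ + 1) (hφ_pos : 0 < φ)
    (hW : W = W' + p) (hp : 0 ≤ p) (hpW : p ≤ (2 - φ) * W) (hsum : b₁' + b₂' = W')
    (hlow : 2 * W' / φ ^ 2 ≤ b₁') (hover : W / φ ^ 3 < b₂' + p) :
    b₂' ≤ W / φ ^ 3 ∧ W / φ ^ 3 ≤ b₁' ∧ b₁' ≤ 2 * W / φ ^ 2 := by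
  rw [two_sub_mul_of_sq_eq_add_one hφ] at hpW
  have hW_nonneg : 0 ≤ W := by
    have := mul_nonneg (hp.trans hpW) (sq_nonneg φ)
    rwa [div_mul_cancel₀ W (by positivity)] at this
  have hW'_split := two_mul_div_sq_add_div_cube_of_sq_eq_add_one hφ W'
  have hW_split := two_mul_div_sq_add_div_cube_of_sq_eq_add_one hφ W
  refine ⟨?_, ?_, by linarith⟩
  · have : W' / φ ^ 3 ≤ W / φ ^ 3 := by gcongr; linarith
    linarith
  · have hW'_ge : W / φ ≤ W' := by linarith [div_add_div_sq_of_sq_eq_add_one hφ W]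
    calc W / φ ^ 3 ≤ 2 * W / φ ^ 3 := by gcongr; linarith
      _ = 2 * (W / φ) / φ ^ 2 := by ring
      _ ≤ 2 * W' / φ ^ 2 := by gcongr
      _ ≤ b₁' := hlow

theorem stmt_10_general (φ R W' p W Q' Q b₁' b₂' : ℝ)
    (hφ : φ = (1 + Real.sqrt 5) / 2) (hR : R = Real.sqrt 5 - 1)
    (hW : W = W' + p) (hp : 0 < p)
    (hpW : p ≤ (2 - φ) * W)
    (hsum : b₁' + b₂' = W')
    (hlow : 2 * W' / φ ^ 2 ≤ b₁') (hhigh : b₁' ≤ R ^ 2 * Q')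
    (hQ : Q' ≤ Q) (hQW : Q ≥ W / 2) :
    (if b₂' + p ≤ W / φ ^ 3 then b₁' else 2 * W / φ ^ 2) +
      (if b₂' + p ≤ W / φ ^ 3 then b₂' + p else W / φ ^ 3) = W ∧
    2 * W / φ ^ 2 ≤ (if b₂' + p ≤ W / φ ^ 3 then b₁' else 2 * W / φ ^ 2) ∧
    (if b₂' + p ≤ W / φ ^ 3 then b₁' else 2 * W / φ ^ 2) ≤ R ^ 2 * Q ∧
    (¬ (b₂' + p ≤ W / φ ^ 3) →
      b₂' ≤ W / φ ^ 3 ∧ W / φ ^ 3 ≤ b₁' ∧ b₁' ≤ 2 * W / φ ^ 2) := by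
  have hgold : φ ^ 2 = φ + 1 := hφ ▸ Real.goldenRatio_sq
  have hφ_pos : 0 < φ := hφ ▸ Real.goldenRatio_pos
  have hR_eq : R = 2 / φ := by
    rw [hR, hφ, div_div_eq_mul_div, eq_div_iff (by positivity)]
    linear_combination Real.sq_sqrt (show (0 : ℝ) ≤ 5 by norm_num)
  have hW_split := two_mul_div_sq_add_div_cube_of_sq_eq_add_one hgold W
  split_ifs with hfit
  · exact ⟨by linarith, by linarith, hhigh.trans (by gcongr), fun h => absurd hfit h⟩
  · refine ⟨hW_split, le_rfl, ?_, fun _ =>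
      preemptive_intervals_disjoint hgold hφ_pos hW hp.le hpW hsum hlow (not_le.mp hfit)⟩
    calc 2 * W / φ ^ 2 = R ^ 2 * (W / 2) := by rw [hR_eq]; ring
      _ ≤ R ^ 2 * Q := by gcongr

/-- Invariant preservation for Case 1 of solution B of the two-solution
preemptive algorithm (Section 3): with φ = (1+√5)/2 and R = √5 − 1, the new
loads (b₁, b₂) satisfy b₁ + b₂ = W and 2W/φ² ≤ b₁ ≤ R²·Q; moreover, in the
preemptive sub-case, the two allocated intervals are disjoint with
nonnegative lengths. -/
theorem stmt_10 (φ R W' p W Q' Q b₁' b₂' : ℝ)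
    (hφ : φ = (1 + Real.sqrt 5) / 2) (hR : R = Real.sqrt 5 - 1)
    (hW : W = W' + p) (hW' : 0 < W') (hp : 0 < p)
    (hpW : p ≤ (2 - φ) * W)
    (hsum : b₁' + b₂' = W')
    (hlow : 2 * W' / φ ^ 2 ≤ b₁') (hhigh : b₁' ≤ R ^ 2 * Q')
    (hQ : Q' ≤ Q) (hQW : Q ≥ W / 2) :
    (if b₂' + p ≤ W / φ ^ 3 then b₁' else 2 * W / φ ^ 2) +
      (if b₂' + p ≤ W / φ ^ 3 then b₂' + p else W / φ ^ 3) = W ∧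
    2 * W / φ ^ 2 ≤ (if b₂' + p ≤ W / φ ^ 3 then b₁' else 2 * W / φ ^ 2) ∧
    (if b₂' + p ≤ W / φ ^ 3 then b₁' else 2 * W / φ ^ 2) ≤ R ^ 2 * Q ∧
    (¬ (b₂' + p ≤ W / φ ^ 3) →
      b₂' ≤ W / φ ^ 3 ∧ W / φ ^ 3 ≤ b₁' ∧ b₁' ≤ 2 * W / φ ^ 2) :=
  stmt_10_general φ R W' p W Q' Q b₁' b₂' hφ hR hW hp hpW hsum hlow hhigh hQ hQW
end

section
/- Let φ = (1+√5)/2 and R = √5 − 1. For all reals W' ≥ 0 and p > W': 2W'/φ + (p − W') ≤ R·p and 4W'/φ² + (p − W') ≤ R²·p. -/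
/-! Since `φ (√5 - 1) = 2`, the loads `2W'/φ` and `4W'/φ²` equal `R W'` and `R² W'`.
Adding the residual part `p - W'` therefore keeps the load below `c p` for `c = R, R²`,
because `c p - (c W' + (p - W')) = (c - 1)(p - W')` and `R² ≥ R ≥ 1`. -/

theorem mul_add_sub_le_mul_of_one_le {c w p : ℝ} (hc : 1 ≤ c) (hwp : w ≤ p) :
    c * w + (p - w) ≤ c * p := by
  nlinarith [mul_nonneg (sub_nonneg.2 hc) (sub_nonneg.2 hwp)]

namespace Real

theorem two_div_goldenRatio : 2 / goldenRatio = √5 - 1 := by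
  rw [div_eq_mul_inv, inv_goldenRatio]
  ring

theorem one_le_sqrt_five_sub_one : 1 ≤ √5 - 1 := by
  have : √4 ≤ √5 := sqrt_le_sqrt (by norm_num)
  rw [show (4 : ℝ) = 2 ^ 2 by norm_num, sqrt_sq zero_le_two] at this
  linarith

end Real

theorem stmt_12_general (φ R W' p : ℝ)
    (hφ : φ = (1 + Real.sqrt 5) / 2) (hR : R = Real.sqrt 5 - 1)
    (hp : W' < p) :
    2 * W' / φ + (p - W') ≤ R * p ∧
    4 * W' / φ ^ 2 + (p - W') ≤ R ^ 2 * p := by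
  have hRφ : 2 / φ = R := hφ ▸ hR ▸ Real.two_div_goldenRatio
  have hR1 : 1 ≤ R := hR ▸ Real.one_le_sqrt_five_sub_one
  have hload₁ : 2 * W' / φ = R * W' := by rw [mul_div_right_comm, hRφ]
  have hload₂ : 4 * W' / φ ^ 2 = R ^ 2 * W' := by
    rw [← hRφ, div_pow, mul_div_right_comm]
    norm_num
  rw [hload₁, hload₂]
  exact ⟨mul_add_sub_le_mul_of_one_le hR1 hp.le,
    mul_add_sub_le_mul_of_one_le (one_le_pow₀ hR1) hp.le⟩

/-- Invariant preservation for Case 3 (a job larger than all previous jobs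
together) of the two-solution preemptive algorithm (Section 3): with
φ = (1+√5)/2 and R = √5 − 1, for p > W' ≥ 0 we have
2W'/φ + (p − W') ≤ R·p and 4W'/φ² + (p − W') ≤ R²·p. -/
theorem stmt_12 (φ R W' p : ℝ)
    (hφ : φ = (1 + Real.sqrt 5) / 2) (hR : R = Real.sqrt 5 - 1)
    (hW' : 0 ≤ W') (hp : W' < p) :
    2 * W' / φ + (p - W') ≤ R * p ∧
    4 * W' / φ ^ 2 + (p - W') ≤ R ^ 2 * p :=
  stmt_12_general φ R W' p hφ hR hp
end

section
/- Let R = 6 − 2√6. Let W', p, Q', Q, a₁', a₂' be reals with 0 < p ≤ 2/5, a₁' + a₂' = W', max(1, (R/2)·W') ≤ a₁' ≤ R·Q', Q' ≤ Q, and Q ≥ W/2 where W = W' + p. Define (a₁, a₂) = (a₁', a₂' + p) if a₂' + p ≤ (1 − R/2)·W, and (a₁, a₂) = ((R/2)·W, (1 − R/2)·W) otherwise. Then a₁ + a₂ = W and max(1, (R/2)·W) ≤ a₁ ≤ R·Q; moreover, in the second case, a₂' ≤ (1 − R/2)·W ≤ a₁' ≤ (R/2)·W. -/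
/-!
Write `r = R/2`. If the new job fits on the second machine, nothing moves: the first load
only shrinks relative to `W`, so `a₁' ≥ r W` follows from the new sum, and `a₁' ≤ R Q' ≤ R Q`.
Otherwise the loads are reset to `(r W, (1 - r) W)`, which is at most `R Q` because `Q ≥ W/2`.
The only delicate point is `(1 - r) W ≤ a₁'`: it is the combination of `a₁' ≥ 1` and
`a₁' ≥ r (W - p)` with weights `(2r - 1)/r` and `(1 - r)/r`, which works as long as
`p ≤ (2r - 1)/(r (1 - r))`. For `R = 6 - 2√6` this bound is `1/√6 > 2/5`.
-/

lemma sqrt_six_ratio_bounds :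
    1 ≤ 6 - 2 * Real.sqrt 6 ∧ 6 - 2 * Real.sqrt 6 ≤ 2 ∧
      (6 - 2 * Real.sqrt 6) / 2 * (1 - (6 - 2 * Real.sqrt 6) / 2) * (2 / 5) ≤
        6 - 2 * Real.sqrt 6 - 1 := by
  have h6 : Real.sqrt 6 * Real.sqrt 6 = 6 := Real.mul_self_sqrt (by norm_num)
  have hlo : (12 / 5 : ℝ) ≤ Real.sqrt 6 := by nlinarith [Real.sqrt_nonneg 6]
  have hhi : Real.sqrt 6 ≤ 49 / 20 := by nlinarith [Real.sqrt_nonneg 6]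
  refine ⟨by linarith, by linarith, by nlinarith⟩

section Invariant

variable {R W' p W Q' Q a₁' a₂' : ℝ}

lemma one_sub_half_mul_le_of_one_le (hR1 : 1 ≤ R) (hR2 : R ≤ 2)
    (hkey : R / 2 * (1 - R / 2) * p ≤ R - 1) (ha : 1 ≤ a₁') (haW : R / 2 * (W - p) ≤ a₁') :
    (1 - R / 2) * W ≤ a₁' := by
  have hr : 0 < R / 2 := by linarith
  refine le_of_mul_le_mul_left ?_ hr
  calc R / 2 * ((1 - R / 2) * W)
      = (R - 1) * 1 + (1 - R / 2) * (R / 2 * (W - p)) + (R / 2 * (1 - R / 2) * p - (R - 1)) := by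
        ring
    _ ≤ (R - 1) * a₁' + (1 - R / 2) * a₁' + 0 := by
        gcongr <;> linarith
    _ = R / 2 * a₁' := by ring

lemma invariant_of_fits (hR : 0 ≤ R) (hW : W = W' + p) (hsum : a₁' + a₂' = W')
    (ha : 1 ≤ a₁') (hhigh : a₁' ≤ R * Q') (hQ : Q' ≤ Q)
    (hfit : a₂' + p ≤ (1 - R / 2) * W) :
    max 1 (R / 2 * W) ≤ a₁' ∧ a₁' ≤ R * Q :=
  ⟨max_le ha (by linarith), hhigh.trans (mul_le_mul_of_nonneg_left hQ hR)⟩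

lemma invariant_of_not_fits (hR1 : 1 ≤ R) (hR2 : R ≤ 2) (hkey : R / 2 * (1 - R / 2) * p ≤ R - 1)
    (hp : 0 ≤ p) (hW : W = W' + p) (hsum : a₁' + a₂' = W')
    (ha : 1 ≤ a₁') (haW : R / 2 * W' ≤ a₁') (hQW : Q ≥ W / 2)
    (hfit : (1 - R / 2) * W < a₂' + p) :
    max 1 (R / 2 * W) ≤ R / 2 * W ∧ R / 2 * W ≤ R * Q ∧
      a₂' ≤ (1 - R / 2) * W ∧ (1 - R / 2) * W ≤ a₁' ∧ a₁' ≤ R / 2 * W := by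
  have hlt : a₁' < R / 2 * W := by linarith
  refine ⟨max_le (by linarith) le_rfl, by nlinarith, by nlinarith,
    one_sub_half_mul_le_of_one_le hR1 hR2 hkey ha (by rwa [hW, add_sub_cancel_right]), hlt.le⟩

end Invariant

/-- Invariant preservation for the first approach (second job of size at most
0.4) of the sorted-input algorithm (Section 4): with R = 6 − 2√6, the new
loads (a₁, a₂) satisfy a₁ + a₂ = W and max 1 ((R/2)·W) ≤ a₁ ≤ R·Q; in the
preemptive sub-case the allocated intervals are disjoint with nonnegative
lengths. -/
theorem stmt_13 (R W' p W Q' Q a₁' a₂' : ℝ)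
    (hR : R = 6 - 2 * Real.sqrt 6)
    (hp : 0 < p) (hp2 : p ≤ 2 / 5) (hW : W = W' + p)
    (hsum : a₁' + a₂' = W')
    (hlow : max 1 (R / 2 * W') ≤ a₁') (hhigh : a₁' ≤ R * Q')
    (hQ : Q' ≤ Q) (hQW : Q ≥ W / 2) :
    (if a₂' + p ≤ (1 - R / 2) * W then a₁' else R / 2 * W) +
      (if a₂' + p ≤ (1 - R / 2) * W then a₂' + p else (1 - R / 2) * W) = W ∧
    max 1 (R / 2 * W) ≤ (if a₂' + p ≤ (1 - R / 2) * W then a₁' else R / 2 * W) ∧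
    (if a₂' + p ≤ (1 - R / 2) * W then a₁' else R / 2 * W) ≤ R * Q ∧
    (¬ (a₂' + p ≤ (1 - R / 2) * W) →
      a₂' ≤ (1 - R / 2) * W ∧ (1 - R / 2) * W ≤ a₁' ∧ a₁' ≤ R / 2 * W) := by
  obtain ⟨hR1, hR2, hkey⟩ := sqrt_six_ratio_bounds
  rw [← hR] at hR1 hR2 hkey
  have hkey' : R / 2 * (1 - R / 2) * p ≤ R - 1 :=
    le_trans (mul_le_mul_of_nonneg_left hp2 (mul_nonneg (by linarith) (by linarith))) hkey
  obtain ⟨ha, haW⟩ := max_le_iff.mp hlow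
  split_ifs with hfit
  · obtain ⟨hlow', hhigh'⟩ := invariant_of_fits (by linarith) hW hsum ha hhigh hQ hfit
    exact ⟨by linarith, hlow', hhigh', fun h => absurd hfit h⟩
  · obtain ⟨hlow', hhigh', hrest⟩ :=
      invariant_of_not_fits hR1 hR2 hkey' hp.le hW hsum ha haW hQW (not_le.mp hfit)
    exact ⟨by ring, hlow', hhigh', fun _ => hrest⟩
end

section
/- Let R = 6 − 2√6. Let W', p, Q', Q, a₁', a₂' be reals with p > 0, W = W' + p, a₁' + a₂' = W', max(R, (R/2)·W') ≤ a₁' ≤ R·Q', Q' ≤ Q, Q ≥ W/2, and such that p ≤ (1 − √6/3)·W or W ≤ √6. Define (a₁, a₂) = (a₁', a₂' + p) if a₂' + p ≤ ((2−R)/2)·W, and (a₁, a₂) = ((R/2)·W, ((2−R)/2)·W) otherwise. Then a₁ + a₂ = W and max(R, (R/2)·W) ≤ a₁ ≤ R·Q; moreover, in the second case, a₂' ≤ ((2−R)/2)·W ≤ a₁' ≤ (R/2)·W. -/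
/-!
If the job fits on the second machine below `(2 - R)/2 · W`, the first machine keeps
`a₁' ≥ R/2 · W` because the two loads still sum to `W`. Otherwise the loads are reset to
`(R/2 · W, (2 - R)/2 · W)`, and the preemptive split needs `(2 - R)/2 · W ≤ a₁'`. The invariant
gives `a₁' ≥ R/2 · W'` and `a₁' ≥ R`, so it suffices that `(2 - R)/2 · W ≤ R/2 · (W - p)` or
`(2 - R)/2 · W ≤ R`. For `R = 6 - 2√6` these are exactly the two case conditions, since
`(2 - R)/2 = √6 - 2`.
-/

section LoadUpdate

variable {R W' p W Q' Q a₁' a₂' : ℝ}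

theorem max_le_of_load_add_le (hsum : a₁' + (a₂' + p) = W) (hlow : R ≤ a₁')
    (h : a₂' + p ≤ (2 - R) / 2 * W) : max R (R / 2 * W) ≤ a₁' :=
  max_le hlow (by linarith)

theorem lt_half_mul_of_lt_load (hsum : a₁' + (a₂' + p) = W) (h : (2 - R) / 2 * W < a₂' + p) :
    a₁' < R / 2 * W := by
  linarith

theorem max_le_half_mul_of_lt_load (hsum : a₁' + (a₂' + p) = W) (hlow : R ≤ a₁')
    (h : (2 - R) / 2 * W < a₂' + p) : max R (R / 2 * W) ≤ R / 2 * W :=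
  max_le (hlow.trans (lt_half_mul_of_lt_load hsum h).le) le_rfl

theorem load_le_of_invariant (hR : R ≤ 2) (hp : 0 ≤ p) (hsum : a₁' + a₂' = W')
    (hW : W = W' + p) (hlow : R / 2 * W' ≤ a₁') : a₂' ≤ (2 - R) / 2 * W := by
  have : (2 - R) / 2 * W' ≤ (2 - R) / 2 * W :=
    mul_le_mul_of_nonneg_left (by linarith) (by linarith)
  linarith

theorem le_load_of_invariant (hlow : max R (R / 2 * W') ≤ a₁')
    (hcase : (2 - R) / 2 * W ≤ R / 2 * W' ∨ (2 - R) / 2 * W ≤ R) :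
    (2 - R) / 2 * W ≤ a₁' := by
  rcases hcase with hc | hc
  · exact hc.trans ((le_max_right _ _).trans hlow)
  · exact hc.trans ((le_max_left _ _).trans hlow)

end LoadUpdate

section SqrtSix

theorem two_lt_sqrt_six : 2 < √6 := by
  rw [show (2 : ℝ) = √(2 ^ 2) by simp]
  exact Real.sqrt_lt_sqrt (by norm_num) (by norm_num)

theorem sqrt_six_lt_three : √6 < 3 := by
  rw [show (3 : ℝ) = √(3 ^ 2) by simp]
  exact Real.sqrt_lt_sqrt (by norm_num) (by norm_num)

theorem threshold_le_of_case {W p : ℝ} (hcase : p ≤ (1 - √6 / 3) * W ∨ W ≤ √6) :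
    (√6 - 2) * W ≤ (3 - √6) * (W - p) ∨ (√6 - 2) * W ≤ 6 - 2 * √6 := by
  have hs : √6 * √6 = 6 := Real.mul_self_sqrt (by norm_num)
  refine hcase.imp (fun hc => ?_) (fun hc => ?_)
  · have := mul_le_mul_of_nonneg_left hc (sub_nonneg.mpr sqrt_six_lt_three.le)
    linear_combination this + W / 3 * hs
  · have := mul_le_mul_of_nonneg_left hc (sub_nonneg.mpr two_lt_sqrt_six.le)
    linear_combination this + hs

end SqrtSix

/-- Invariant preservation for Case 1 of solution A in the second approach of
the sorted-input algorithm (Section 4): with R = 6 − 2√6, under the case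
condition (small job or small total size), the new loads (a₁, a₂) satisfy
a₁ + a₂ = W and max R ((R/2)·W) ≤ a₁ ≤ R·Q; in the preemptive sub-case the
allocated intervals are disjoint with nonnegative lengths. -/
theorem stmt_14 (R W' p W Q' Q a₁' a₂' : ℝ)
    (hR : R = 6 - 2 * Real.sqrt 6)
    (hp : 0 < p) (hW : W = W' + p)
    (hsum : a₁' + a₂' = W')
    (hlow : max R (R / 2 * W') ≤ a₁') (hhigh : a₁' ≤ R * Q')
    (hQ : Q' ≤ Q) (hQW : Q ≥ W / 2)
    (hcase : p ≤ (1 - Real.sqrt 6 / 3) * W ∨ W ≤ Real.sqrt 6) :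
    (if a₂' + p ≤ (2 - R) / 2 * W then a₁' else R / 2 * W) +
      (if a₂' + p ≤ (2 - R) / 2 * W then a₂' + p else (2 - R) / 2 * W) = W ∧
    max R (R / 2 * W) ≤ (if a₂' + p ≤ (2 - R) / 2 * W then a₁' else R / 2 * W) ∧
    (if a₂' + p ≤ (2 - R) / 2 * W then a₁' else R / 2 * W) ≤ R * Q ∧
    (¬ (a₂' + p ≤ (2 - R) / 2 * W) →
      a₂' ≤ (2 - R) / 2 * W ∧ (2 - R) / 2 * W ≤ a₁' ∧ a₁' ≤ R / 2 * W) := by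
  have hRpos : 0 < R := by linarith [hR, sqrt_six_lt_three]
  have hR2 : R ≤ 2 := by linarith [hR, two_lt_sqrt_six]
  have hsum' : a₁' + (a₂' + p) = W := by linarith
  have hthreshold : (2 - R) / 2 * W ≤ R / 2 * W' ∨ (2 - R) / 2 * W ≤ R := by
    have := threshold_le_of_case hcase
    rwa [hR, show (2 - (6 - 2 * √6)) / 2 = √6 - 2 by ring,
      show (6 - 2 * √6) / 2 = 3 - √6 by ring, show W' = W - p by linarith]
  have hR_le : R ≤ a₁' := (le_max_left _ _).trans hlow
  by_cases h : a₂' + p ≤ (2 - R) / 2 * W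
  · simp only [if_pos h]
    exact ⟨hsum', max_le_of_load_add_le hsum' hR_le h,
      hhigh.trans (mul_le_mul_of_nonneg_left hQ hRpos.le), absurd h⟩
  · simp only [if_neg h]
    have h' := not_le.mp h
    refine ⟨by ring, max_le_half_mul_of_lt_load hsum' hR_le h',
      by linarith [mul_le_mul_of_nonneg_left hQW hRpos.le], fun _ => ⟨?_, ?_, ?_⟩⟩
    · exact load_le_of_invariant hR2 hp.le hsum hW ((le_max_right _ _).trans hlow)
    · exact le_load_of_invariant hlow hthreshold
    · exact (lt_half_mul_of_lt_load hsum' h').le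
end

section
/- Let R = 6 − 2√6 and r = 3√6 − 6. Let W', p, Q', Q, b₁', b₂' be reals with p > 0, W = W' + p, b₁' + b₂' = W', max(r, (3/5)·W') ≤ b₁' ≤ r·Q', Q' ≤ Q, Q ≥ W/2, and such that p ≤ (1 − √6/3)·W or W ≤ √6. Define (b₁, b₂) = (b₁', b₂' + p) if b₂' + p ≤ (2/5)·W, and (b₁, b₂) = ((3/5)·W, (2/5)·W) otherwise. Then b₁ + b₂ = W and max(r, (3/5)·W) ≤ b₁ ≤ r·Q; moreover, in the second case, b₂' ≤ (2/5)·W ≤ b₁' ≤ (3/5)·W. -/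
/-! If the new job still fits on the second machine within `2/5·W`, the first load is unchanged and
still meets both bounds, as `b₁' = W - (b₂' + p) ≥ 3/5·W`, `r ≥ 0` and `Q' ≤ Q`. Otherwise the loads are reset to
`(3/5·W, 2/5·W)`, which stays below `r·Q` because `r ≥ 6/5` and `Q ≥ W/2`. The case condition is
what guarantees `b₁' ≥ 2/5·W` there: for a small job `b₁' ≥ 3/5·W' ≥ (√6/5)·W`, and for a small
total `b₁' ≥ r ≥ (2/5)·√6 ≥ 2/5·W`. -/

lemma twelve_fifths_le_sqrt_six : (12 / 5 : ℝ) ≤ √6 :=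
  Real.le_sqrt_of_sq_le (by norm_num)

lemma two_fifths_mul_le_of_small_job_or_small_total {W' p W b₁' : ℝ} (hp : 0 < p)
    (hW : W = W' + p) (hlow : max (3 * √6 - 6) (3 / 5 * W') ≤ b₁')
    (hcase : p ≤ (1 - √6 / 3) * W ∨ W ≤ √6) : 2 / 5 * W ≤ b₁' := by
  have hs := twelve_fifths_le_sqrt_six
  obtain ⟨hr, hW'⟩ := max_le_iff.1 hlow
  rcases hcase with hsmall_job | hsmall_total
  · have hs3 : √6 < 3 := (Real.sqrt_lt' (by norm_num)).2 (by norm_num)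
    have hW0 : 0 ≤ W := by nlinarith
    nlinarith
  · linarith

lemma load_invariant_of_fits {r W' p W Q' Q b₁' b₂' : ℝ} (hr : 0 ≤ r) (hW : W = W' + p)
    (hsum : b₁' + b₂' = W') (hlow : r ≤ b₁') (hhigh : b₁' ≤ r * Q') (hQ : Q' ≤ Q)
    (hfit : b₂' + p ≤ 2 / 5 * W) :
    b₁' + (b₂' + p) = W ∧ max r (3 / 5 * W) ≤ b₁' ∧ b₁' ≤ r * Q :=
  ⟨by linarith, max_le hlow (by linarith), hhigh.trans (mul_le_mul_of_nonneg_left hQ hr)⟩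

lemma load_invariant_of_overflow {r W' p W Q b₁' b₂' : ℝ} (hr : 6 / 5 ≤ r) (hp : 0 < p)
    (hW : W = W' + p) (hsum : b₁' + b₂' = W') (hlow : max r (3 / 5 * W') ≤ b₁')
    (hQW : W / 2 ≤ Q) (htwo : 2 / 5 * W ≤ b₁') (hover : 2 / 5 * W < b₂' + p) :
    max r (3 / 5 * W) ≤ 3 / 5 * W ∧ 3 / 5 * W ≤ r * Q ∧
      b₂' ≤ 2 / 5 * W ∧ 2 / 5 * W ≤ b₁' ∧ b₁' ≤ 3 / 5 * W := by
  obtain ⟨hr_le, hW'_le⟩ := max_le_iff.1 hlow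
  have hb₁ : b₁' < 3 / 5 * W := by linarith
  have hW0 : 0 < W := by linarith
  refine ⟨max_le (by linarith) le_rfl, ?_, by linarith, htwo, hb₁.le⟩
  calc 3 / 5 * W = 6 / 5 * (W / 2) := by ring
    _ ≤ r * Q := mul_le_mul hr hQW (by positivity) (by linarith)

/-- Invariant preservation for Case 1 of solution B in the second approach of
the sorted-input algorithm (Section 4): with r = 3√6 − 6, under the case
condition (small job or small total size), the new loads (b₁, b₂) satisfy
b₁ + b₂ = W and max r ((3/5)·W) ≤ b₁ ≤ r·Q; in the preemptive sub-case the
allocated intervals are disjoint with nonnegative lengths. -/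
theorem stmt_15 (r W' p W Q' Q b₁' b₂' : ℝ)
    (hr : r = 3 * Real.sqrt 6 - 6)
    (hp : 0 < p) (hW : W = W' + p)
    (hsum : b₁' + b₂' = W')
    (hlow : max r (3 / 5 * W') ≤ b₁') (hhigh : b₁' ≤ r * Q')
    (hQ : Q' ≤ Q) (hQW : Q ≥ W / 2)
    (hcase : p ≤ (1 - Real.sqrt 6 / 3) * W ∨ W ≤ Real.sqrt 6) :
    (if b₂' + p ≤ 2 / 5 * W then b₁' else 3 / 5 * W) +
      (if b₂' + p ≤ 2 / 5 * W then b₂' + p else 2 / 5 * W) = W ∧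
    max r (3 / 5 * W) ≤ (if b₂' + p ≤ 2 / 5 * W then b₁' else 3 / 5 * W) ∧
    (if b₂' + p ≤ 2 / 5 * W then b₁' else 3 / 5 * W) ≤ r * Q ∧
    (¬ (b₂' + p ≤ 2 / 5 * W) →
      b₂' ≤ 2 / 5 * W ∧ 2 / 5 * W ≤ b₁' ∧ b₁' ≤ 3 / 5 * W) := by
  have hs := twelve_fifths_le_sqrt_six
  split_ifs with hfit
  · obtain ⟨hsum_new, hlow_new, hhigh_new⟩ := load_invariant_of_fits (by linarith) hW hsum
      ((le_max_left _ _).trans hlow) hhigh hQ hfit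
    exact ⟨hsum_new, hlow_new, hhigh_new, absurd hfit⟩
  · subst hr
    have htwo := two_fifths_mul_le_of_small_job_or_small_total hp hW hlow hcase
    obtain ⟨hlow_new, hhigh_new, hsplit⟩ :=
      load_invariant_of_overflow (by linarith) hp hW hsum hlow hQW htwo (not_le.1 hfit)
    exact ⟨by ring, hlow_new, hhigh_new, fun _ => hsplit⟩
end

section
/- Let R = 6 − 2√6 and r = 3√6 − 6. Let W', p, a₁', a₂', b₁', b₂' be reals with W = W' + p, p > (1 − √6/3)·W, W > √6, p ≤ W/3, and such that W ≤ (4/3)·W' or W ≤ 3. Suppose a₁' + a₂' = W' with max(R, (R/2)·W') ≤ a₁' ≤ R·max(1, W'/2), and b₁' + b₂' = W' with max(r, (3/5)·W') ≤ b₁' ≤ r·max(1, W'/2). Let Γ = min(a₂' + p, a₁', (2/5)·W). Then: (1) b₂' ≤ ((2−R)/2)·W ≤ b₁' ≤ (R/2)·W; (2) a₂' ≤ Γ ≤ a₁' ≤ W − Γ; and (3) (3/5)·W ≤ W − Γ ≤ (r/2)·W. -/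
/-!
Write `s = √6`, so `R = 6 − 2s`, `r = 3s − 6`, `R/2 = 3 − s`, `(2 − R)/2 = s − 2` and
`1 − r/2 = (8 − 3s)/2`. Since `p > (1 − s/3)·W` and `W > s = 6/s`, the old optimum
`max(1, W'/2)` is at most `(s/3)·(W/2)`, and the constants are tuned so that
`R·(s/3) = 2 − R` and `r·(s/3) = R`: this turns the old upper bounds on `a₁'` and `b₁'`
into `a₁' ≤ (s − 2)·W` and `b₁' ≤ (R/2)·W`. The lower bounds come from
`W ≤ max(3, (4/3)·W')`, which converts the old lower bounds `max(R, (R/2)·W')` and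
`max(r, (3/5)·W')` into multiples of `W`. Everything else is linear arithmetic, using
only `2.4 < s < 2.45`.
-/

open Real

lemma sqrt_six_gt : (2.4 : ℝ) < √6 := by
  rw [Real.lt_sqrt (by norm_num)]
  norm_num

lemma sqrt_six_lt : √6 < (2.45 : ℝ) := by
  rw [Real.sqrt_lt' (by norm_num)]
  norm_num

lemma max_one_half_le_of_sqrt_six_lt {W W' : ℝ} (hW6 : √6 < W) (hW' : 3 * W' < √6 * W) :
    max 1 (W' / 2) ≤ √6 / 3 * (W / 2) := by
  have hsq : √6 * √6 = 6 := Real.mul_self_sqrt (by norm_num)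
  refine max_le ?_ (by linarith)
  nlinarith [sqrt_six_gt]

lemma le_sqrt_six_div_three_mul_of_le_mul_max {x c W W' : ℝ} (hc : 0 ≤ c) (hW6 : √6 < W)
    (hW' : 3 * W' < √6 * W) (hx : x ≤ c * max 1 (W' / 2)) :
    x ≤ c * (√6 / 3 * (W / 2)) :=
  hx.trans (mul_le_mul_of_nonneg_left (max_one_half_le_of_sqrt_six_lt hW6 hW') hc)

lemma six_sub_two_sqrt_six_mul (W : ℝ) :
    (6 - 2 * √6) * (√6 / 3 * (W / 2)) = (√6 - 2) * W := by
  linear_combination (-W / 3) * Real.sq_sqrt (show (0 : ℝ) ≤ 6 by norm_num)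

lemma three_sqrt_six_sub_six_mul (W : ℝ) :
    (3 * √6 - 6) * (√6 / 3 * (W / 2)) = (3 - √6) * W := by
  linear_combination (W / 2) * Real.sq_sqrt (show (0 : ℝ) ≤ 6 by norm_num)

lemma mul_le_of_max_le_of_le_max {k c d x W W' : ℝ} (hk : 0 ≤ k) (hW' : 0 ≤ W')
    (hW : W ≤ max 3 (4 / 3 * W')) (hc : 3 * k ≤ c) (hd : 4 / 3 * k ≤ d)
    (hx : max c (d * W') ≤ x) : k * W ≤ x :=
  calc k * W ≤ k * max 3 (4 / 3 * W') := mul_le_mul_of_nonneg_left hW hk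
    _ = max (3 * k) (4 / 3 * k * W') := by rw [mul_max_of_nonneg _ _ hk]; ring_nf
    _ ≤ max c (d * W') := max_le_max hc (mul_le_mul_of_nonneg_right hd hW')
    _ ≤ x := hx

section

variable {W W' : ℝ}

lemma old_b_load_bounds {R r b₁' b₂' : ℝ} (hR : R = 6 - 2 * √6) (hr : r = 3 * √6 - 6)
    (hW6 : √6 < W) (hW'lt : 3 * W' < √6 * W) (hW'pos : 0 ≤ W')
    (hWmax : W ≤ max 3 (4 / 3 * W')) (hb : b₁' + b₂' = W')
    (hb1 : max r (3 / 5 * W') ≤ b₁') (hb2 : b₁' ≤ r * max 1 (W' / 2)) :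
    b₂' ≤ (2 - R) / 2 * W ∧ (2 - R) / 2 * W ≤ b₁' ∧ b₁' ≤ R / 2 * W := by
  subst hR hr
  have hs := sqrt_six_gt
  have hsW : 2.4 * W ≤ √6 * W := mul_le_mul_of_nonneg_right hs.le (by linarith)
  have hb1_le : b₁' ≤ (3 - √6) * W :=
    (le_sqrt_six_div_three_mul_of_le_mul_max (by linarith) hW6 hW'lt hb2).trans_eq
      (three_sqrt_six_sub_six_mul W)
  have hb1_ge : (√6 - 2) * W ≤ b₁' :=
    mul_le_of_max_le_of_le_max (by linarith) hW'pos hWmax (by linarith)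
      (by linarith [sqrt_six_lt]) hb1
  exact ⟨by linarith [le_trans (le_max_right _ _) hb1], by linarith, by linarith⟩

lemma old_a_gamma_bounds {R r p a₁' a₂' Γ : ℝ} (hR : R = 6 - 2 * √6) (hr : r = 3 * √6 - 6)
    (hW : W = W' + p) (hW6 : √6 < W) (hW'lt : 3 * W' < √6 * W) (hW'pos : 0 ≤ W')
    (hWmax : W ≤ max 3 (4 / 3 * W')) (ha : a₁' + a₂' = W')
    (ha1 : max R (R / 2 * W') ≤ a₁') (ha2 : a₁' ≤ R * max 1 (W' / 2))
    (hΓ : Γ = min (a₂' + p) (min a₁' (2 / 5 * W))) :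
    (a₂' ≤ Γ ∧ Γ ≤ a₁' ∧ a₁' ≤ W - Γ) ∧ (3 / 5 * W ≤ W - Γ ∧ W - Γ ≤ r / 2 * W) := by
  subst hR hr hΓ
  have hs := sqrt_six_gt
  have hs' := sqrt_six_lt
  have hsW : 2.4 * W ≤ √6 * W ∧ √6 * W ≤ 2.45 * W :=
    ⟨mul_le_mul_of_nonneg_right hs.le (by linarith),
      mul_le_mul_of_nonneg_right hs'.le (by linarith)⟩
  have ha1_le : a₁' ≤ (√6 - 2) * W :=
    (le_sqrt_six_div_three_mul_of_le_mul_max (by linarith) hW6 hW'lt ha2).trans_eq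
      (six_sub_two_sqrt_six_mul W)
  have ha1_ge : (8 - 3 * √6) / 2 * W ≤ a₁' :=
    mul_le_of_max_le_of_le_max (by linarith) hW'pos hWmax (by linarith) (by linarith) ha1
  have ha1_ge_W' : (3 - √6) * W' ≤ a₁' := by linarith [le_trans (le_max_right _ _) ha1]
  have ha2_le_a1 : a₂' ≤ a₁' := by
    linarith [mul_nonneg (show 0 ≤ 5 - 2 * √6 by linarith) hW'pos]
  have ha2_le : a₂' ≤ 2 / 5 * W := by
    linarith [mul_le_mul_of_nonneg_right hs'.le hW'pos]
  have hΓ_le : min (a₂' + p) (min a₁' (2 / 5 * W)) ≤ 2 / 5 * W :=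
    (min_le_right _ _).trans (min_le_right _ _)
  have hΓ_ge : (8 - 3 * √6) / 2 * W ≤ min (a₂' + p) (min a₁' (2 / 5 * W)) :=
    le_min (by linarith) (le_min ha1_ge (by linarith))
  exact ⟨⟨le_min (by linarith) (le_min ha2_le_a1 ha2_le),
    (min_le_right _ _).trans (min_le_left _ _), by linarith⟩, by linarith, by linarith⟩

end

/-- Validity and invariant preservation for Case 2 (the swap case) of the
second approach of the sorted-input algorithm (Section 4), with R = 6 − 2√6
and r = 3√6 − 6. -/
theorem stmt_16 (R r W' p W a₁' a₂' b₁' b₂' Γ : ℝ)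
    (hR : R = 6 - 2 * Real.sqrt 6) (hr : r = 3 * Real.sqrt 6 - 6)
    (hW : W = W' + p)
    (hpbig : (1 - Real.sqrt 6 / 3) * W < p) (hW6 : Real.sqrt 6 < W)
    (hp3 : p ≤ W / 3)
    (hprev : W ≤ 4 / 3 * W' ∨ W ≤ 3)
    (ha : a₁' + a₂' = W')
    (ha1 : max R (R / 2 * W') ≤ a₁') (ha2 : a₁' ≤ R * max 1 (W' / 2))
    (hb : b₁' + b₂' = W')
    (hb1 : max r (3 / 5 * W') ≤ b₁') (hb2 : b₁' ≤ r * max 1 (W' / 2))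
    (hΓ : Γ = min (a₂' + p) (min a₁' (2 / 5 * W))) :
    (b₂' ≤ (2 - R) / 2 * W ∧ (2 - R) / 2 * W ≤ b₁' ∧ b₁' ≤ R / 2 * W) ∧
    (a₂' ≤ Γ ∧ Γ ≤ a₁' ∧ a₁' ≤ W - Γ) ∧
    (3 / 5 * W ≤ W - Γ ∧ W - Γ ≤ r / 2 * W) := by
  have hW'lt : 3 * W' < √6 * W := by linarith
  have hW'pos : 0 ≤ W' := by linarith [Real.sqrt_nonneg 6]
  have hWmax : W ≤ max 3 (4 / 3 * W') := le_max_iff.2 hprev.symm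
  exact ⟨old_b_load_bounds hR hr hW6 hW'lt hW'pos hWmax hb hb1 hb2,
    old_a_gamma_bounds hR hr hW hW6 hW'lt hW'pos hWmax ha ha1 ha2 hΓ⟩
end
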